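/- arXiv:1702.08447 — 3 statements merged into one kernel-verified Lean document; each statement's English description precedes it below -/
import Mathlib

section
/- Let N and K be positive integers, let σ : Fin N → Fin N be a fixed-point-free involution (a permutation with σ ∘ σ = id and σ i ≠ i for all i), let p : Fin K → [0,1] be a probability vector (∑_k p_k = 1), and let (W_i)_{i∈Fin N} be i.i.d. Fin K-valued random variables with P(W_i = k) = p_k for all i and k. Then for every m, ℓ ∈ Fin K and every ε > 0: P( | (1/N) ∑_{i∈Fin N} 1{W_i = m}·1{W_{σ i} = ℓ} − p_m p_ℓ | > ε ) ≤ 2 exp(−N ε²). -/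
open MeasureTheory ProbabilityTheory

/-! Group the summands along the matching: the pair `{i, σ i}` with `i < σ i` contributes
`Z i = g (W i) (W (σ i)) + g (W (σ i)) (W i) ∈ [0, 2]`, a function of `W i` and `W (σ i)` alone.
The `N / 2` pair contributions are therefore independent, and by Hoeffding's lemma each centred
one is sub-Gaussian with variance proxy `1`. Hoeffding's inequality then bounds each tail of a
deviation `N ε` of the total by `exp (-(N ε) ^ 2 / N) = exp (-N ε ^ 2)`. -/

open Finset Real
open scoped NNReal

section Involution

variable {ι : Type*} [Fintype ι] [LinearOrder ι] {σ : ι → ι}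

lemma Function.Involutive.sum_filter_lt_add {M : Type*} [AddCommMonoid M]
    (hσ : Function.Involutive σ) (hfix : ∀ i, σ i ≠ i) (f : ι → M) :
    ∑ i ∈ univ.filter (fun i ↦ i < σ i), (f i + f (σ i)) = ∑ i, f i := by
  rw [sum_add_distrib, ← sum_filter_add_sum_filter_not univ (fun i ↦ i < σ i) f]
  congr 1
  refine sum_nbij' σ σ (fun i hi ↦ ?_) (fun i hi ↦ ?_) (fun i _ ↦ hσ i) (fun i _ ↦ hσ i)
    (fun i _ ↦ rfl)
  · simp only [mem_filter, mem_univ, true_and, hσ i, not_lt] at hi ⊢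
    exact hi.le
  · simp only [mem_filter, mem_univ, true_and, hσ i, not_lt] at hi ⊢
    exact lt_of_le_of_ne hi (hfix i)

lemma Function.Involutive.two_mul_card_filter_lt (hσ : Function.Involutive σ)
    (hfix : ∀ i, σ i ≠ i) : 2 * #(univ.filter fun i ↦ i < σ i) = Fintype.card ι := by
  simpa [mul_comm] using hσ.sum_filter_lt_add hfix fun _ ↦ (1 : ℕ)

lemma Function.Involutive.pairwiseDisjoint_filter_lt (hσ : Function.Involutive σ) :
    ((univ.filter (fun i ↦ i < σ i) : Finset ι) : Set ι).PairwiseDisjoint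
      (fun i ↦ ({i, σ i} : Set ι)) := by
  intro i hi j hj hij
  simp only [coe_filter, mem_univ, true_and, Set.mem_ofPred_eq] at hi hj
  have := hσ i
  have := hσ j
  rw [Function.onFun, Set.disjoint_left]
  simp only [Set.mem_insert_iff, Set.mem_singleton_iff]
  grind

end Involution

namespace ProbabilityTheory.HasSubgaussianMGF

variable {Ω ι κ : Type*} {mΩ : MeasurableSpace Ω} {μ : Measure Ω}

lemma sum_of_iIndep_of_pairwiseDisjoint {m : ι → MeasurableSpace Ω} (h_le : ∀ i, m i ≤ mΩ)
    (h_indep : iIndep m μ) {B : κ → Set ι} {Y : κ → Ω → ℝ} {c : κ → ℝ≥0} {s : Finset κ}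
    (hB : (s : Set κ).PairwiseDisjoint B) (hY_meas : ∀ j ∈ s, Measurable[⨆ i ∈ B j, m i] (Y j))
    (hY : ∀ j ∈ s, HasSubgaussianMGF (Y j) (c j) μ) :
    HasSubgaussianMGF (fun ω ↦ ∑ j ∈ s, Y j ω) (∑ j ∈ s, c j) μ := by
  classical
  have := h_indep.isProbabilityMeasure
  induction s using Finset.induction_on with
  | empty => simp [fun_zero]
  | insert j s hj ih =>
    rw [coe_insert, Set.pairwiseDisjoint_insert_of_notMem (mod_cast hj)] at hB
    simp_rw [sum_insert hj]
    refine (hY j (mem_insert_self j s)).add_of_indepFun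
      (ih hB.1 (fun k hk ↦ hY_meas k (mem_insert_of_mem hk))
        (fun k hk ↦ hY k (mem_insert_of_mem hk))) ?_
    have h_disj : Disjoint (B j) (⋃ k ∈ s, B k) :=
      Set.disjoint_iUnion₂_right.2 fun k hk ↦ hB.2 k hk
    have h_sum_meas : Measurable[⨆ i ∈ ⋃ k ∈ s, B k, m i] (fun ω ↦ ∑ k ∈ s, Y k ω) := by
      refine @Finset.measurable_sum _ _ _ _ _ _ (⨆ i ∈ ⋃ k ∈ s, B k, m i) _ _ fun k hk ↦ ?_
      refine (hY_meas k (mem_insert_of_mem hk)).mono ?_ le_rfl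
      exact iSup₂_le fun i hi ↦ le_iSup₂ (f := fun i _ ↦ m i) i (Set.mem_biUnion hk hi)
    rw [IndepFun_iff_Indep]
    exact indep_of_indep_of_le (indep_iSup_of_disjoint h_le h_indep h_disj)
      (hY_meas j (mem_insert_self j s)).comap_le h_sum_meas.comap_le

lemma measure_abs_ge_le {X : Ω → ℝ} {c : ℝ≥0} [IsFiniteMeasure μ]
    (h : HasSubgaussianMGF X c μ) {ε : ℝ} (hε : 0 ≤ ε) :
    μ {ω | ε ≤ |X ω|} ≤ ENNReal.ofReal (2 * exp (-ε ^ 2 / (2 * c))) := by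
  have h_split : {ω | ε ≤ |X ω|} = {ω | ε ≤ X ω} ∪ {ω | ε ≤ (-X) ω} := by
    ext ω; simp [le_abs]
  rw [← ofReal_measureReal, h_split]
  gcongr
  linarith [measureReal_union_le (μ := μ) {ω | ε ≤ X ω} {ω | ε ≤ (-X) ω},
    h.measure_ge_le hε, h.neg.measure_ge_le hε]

end ProbabilityTheory.HasSubgaussianMGF

section Matching

variable {Ω ι β : Type*} {mΩ : MeasurableSpace Ω} {μ : Measure Ω} [mβ : MeasurableSpace β]

lemma measurable_iSup_comap_pair {W : ι → Ω → β} {g : β → β → ℝ}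
    (hg : Measurable (Function.uncurry g)) (i j : ι) :
    Measurable[⨆ k ∈ ({i, j} : Set ι), mβ.comap (W k)] (fun ω ↦ g (W i ω) (W j ω)) := by
  have hW (k) (hk : k ∈ ({i, j} : Set ι)) :
      Measurable[⨆ k ∈ ({i, j} : Set ι), mβ.comap (W k)] (W k) :=
    (comap_measurable (W k)).mono (le_iSup₂ (f := fun k _ ↦ mβ.comap (W k)) k hk) le_rfl
  exact hg.comp ((hW i (by simp)).prodMk (hW j (by simp)))

lemma integral_ite_eq_measureReal [MeasurableSingletonClass β] [DecidableEq β] {X : Ω → β}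
    (hX : Measurable X) (b : β) :
    ∫ ω, (if X ω = b then (1 : ℝ) else 0) ∂μ = μ.real {ω | X ω = b} := by
  rw [← integral_indicator_one (s := {ω | X ω = b}) (hX (measurableSet_singleton b))]
  simp [Set.indicator_apply]

variable [Fintype ι] [LinearOrder ι] {σ : ι → ι}

theorem measure_abs_sum_involution_sub_ge_le [IsProbabilityMeasure μ]
    {W : ι → Ω → β} (hW : ∀ i, Measurable (W i)) (hindep : iIndepFun W μ)
    (hσ : Function.Involutive σ) (hfix : ∀ i, σ i ≠ i) {g : β → β → ℝ}
    (hg : Measurable (Function.uncurry g)) (hg01 : ∀ a b, g a b ∈ Set.Icc 0 1) {q : ℝ}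
    (hq : ∀ i, μ[fun ω ↦ g (W i ω) (W (σ i) ω)] = q) {ε : ℝ} (hε : 0 ≤ ε) :
    μ {ω | Fintype.card ι * ε ≤ |∑ i, g (W i ω) (W (σ i) ω) - Fintype.card ι * q|} ≤
      ENNReal.ofReal (2 * exp (-Fintype.card ι * ε ^ 2)) := by
  set Z : ι → Ω → ℝ := fun i ω ↦ g (W i ω) (W (σ i) ω) + g (W (σ i) ω) (W i ω)
  have h_meas (i) : Measurable[⨆ k ∈ ({i, σ i} : Set ι), mβ.comap (W k)] (Z i) := by
    refine (measurable_iSup_comap_pair hg i (σ i)).add ?_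
    rw [Set.pair_comm]
    exact measurable_iSup_comap_pair hg (σ i) i
  have h_mem (i ω) : Z i ω ∈ Set.Icc 0 2 := by
    have h₁ := hg01 (W i ω) (W (σ i) ω)
    have h₂ := hg01 (W (σ i) ω) (W i ω)
    exact ⟨add_nonneg h₁.1 h₂.1, by linarith [h₁.2, h₂.2]⟩
  have h_int (i) : Integrable (fun ω ↦ g (W i ω) (W (σ i) ω)) μ :=
    .of_mem_Icc 0 1 (hg.comp ((hW i).prodMk (hW (σ i)))).aemeasurable
      (ae_of_all _ fun ω ↦ hg01 _ _)
  have h_mean (i) : μ[Z i] = 2 * q := by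
    have hqσ := hq (σ i)
    have hintσ := h_int (σ i)
    rw [hσ i] at hqσ hintσ
    rw [integral_add (h_int i) hintσ, hq i, hqσ, two_mul]
  have h_subG (i) : HasSubgaussianMGF (fun ω ↦ Z i ω - μ[Z i]) 1 μ := by
    simpa using hasSubgaussianMGF_of_mem_Icc (μ := μ)
      ((h_meas i).mono (iSup₂_le fun k _ ↦ (hW k).comap_le) le_rfl).aemeasurable
      (ae_of_all _ (h_mem i))
  have h_card : (Fintype.card ι : ℝ) = 2 * #(univ.filter fun i ↦ i < σ i) := by
    exact_mod_cast (hσ.two_mul_card_filter_lt hfix).symm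
  have h_sum (ω) : ∑ i, g (W i ω) (W (σ i) ω) - Fintype.card ι * q =
      ∑ i ∈ univ.filter (fun i ↦ i < σ i), (Z i ω - μ[Z i]) := by
    rw [← hσ.sum_filter_lt_add hfix, h_card]
    simp only [Z, h_mean, hσ _, sum_sub_distrib, sum_const, nsmul_eq_mul]
    ring
  have h_tail := (HasSubgaussianMGF.sum_of_iIndep_of_pairwiseDisjoint (fun i ↦ (hW i).comap_le)
    hindep.iIndep hσ.pairwiseDisjoint_filter_lt (fun i _ ↦ (h_meas i).sub_const _)
      (fun i _ ↦ h_subG i)).measure_abs_ge_le (ε := Fintype.card ι * ε) (by positivity)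
  simp_rw [h_sum]
  convert h_tail using 4
  rw [sum_const, nsmul_one, NNReal.coe_natCast, h_card]
  rcases eq_or_ne (#(univ.filter fun i ↦ i < σ i) : ℝ) 0 with h | h
  · simp [h]
  · field_simp

end Matching

lemma mul_le_abs_sub_mul_of_lt_abs {n : ℕ} {x q ε : ℝ} (h : ε < |1 / (n : ℝ) * x - q|) :
    n * ε ≤ |x - n * q| := by
  rcases n.eq_zero_or_pos with rfl | hn
  · simp
  · have hx : x - n * q = n * (1 / (n : ℝ) * x - q) := by field_simp
    rw [hx, abs_mul, Nat.abs_cast]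
    exact mul_le_mul_of_nonneg_left h.le n.cast_nonneg

theorem single_matching_concentration_general
    {Ω : Type*} [MeasurableSpace Ω] (μ : Measure Ω) [IsProbabilityMeasure μ]
    (N K : ℕ)
    (σ : Fin N → Fin N) (hσinv : ∀ i, σ (σ i) = i) (hσnf : ∀ i, σ i ≠ i)
    (p : Fin K → ℝ) (hp0 : ∀ k, 0 ≤ p k)
    (W : Fin N → Ω → Fin K) (hWmeas : ∀ i, Measurable (W i))
    -- the `W i` are independent and identically distributed with law `p`:
    (hindep : iIndepFun W μ)
    (hlaw : ∀ i k, μ {ω | W i ω = k} = ENNReal.ofReal (p k))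
    (m ℓ : Fin K) (ε : ℝ) (hε : 0 < ε) :
    μ {ω | ε <
        |(1 / (N : ℝ)) * ∑ i : Fin N,
          (if W i ω = m then (1 : ℝ) else 0) *
            (if W (σ i) ω = ℓ then (1 : ℝ) else 0) - p m * p ℓ|} ≤
      ENNReal.ofReal (2 * Real.exp (-(N : ℝ) * ε ^ 2)) := by
  have h_law (i k) : ∫ ω, (if W i ω = k then (1 : ℝ) else 0) ∂μ = p k := by
    rw [integral_ite_eq_measureReal (hWmeas i), measureReal_def, hlaw,
      ENNReal.toReal_ofReal (hp0 k)]
  have h_mean (i) : ∫ ω, (if W i ω = m then (1 : ℝ) else 0) *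
      (if W (σ i) ω = ℓ then (1 : ℝ) else 0) ∂μ = p m * p ℓ := by
    rw [← h_law i m, ← h_law (σ i) ℓ]
    exact (hindep.indepFun (hσnf i).symm).integral_comp_mul_comp (hWmeas i).aemeasurable
      (hWmeas (σ i)).aemeasurable (f := fun a ↦ if a = m then (1 : ℝ) else 0)
      (g := fun b ↦ if b = ℓ then (1 : ℝ) else 0) (measurable_of_countable _).aestronglyMeasurable
      (measurable_of_countable _).aestronglyMeasurable
  have h_mem (a b : Fin K) :
      (if a = m then (1 : ℝ) else 0) * (if b = ℓ then (1 : ℝ) else 0) ∈ Set.Icc 0 1 := by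
    split_ifs <;> norm_num
  have h := measure_abs_sum_involution_sub_ge_le hWmeas hindep hσinv hσnf
    (measurable_of_countable _) h_mem h_mean hε.le
  rw [Fintype.card_fin] at h
  exact (measure_mono fun ω ↦ mul_le_abs_sub_mul_of_lt_abs).trans h

/-- The single-matching concentration step in the proof of Lemma 4.1 of the
paper: if `σ` is a fixed-point-free involution of `Fin N` (encoding a perfect
matching) and the `(W i)_i` are i.i.d. `Fin K`-valued with law `p`, then the
normalized count `(1/N) ∑ i, 1{W i = m} 1{W (σ i) = ℓ}` concentrates at
`p m * p ℓ` with bound `2 exp (-N ε²)`, uniformly in `p`. -/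
theorem single_matching_concentration
    {Ω : Type*} [MeasurableSpace Ω] (μ : Measure Ω) [IsProbabilityMeasure μ]
    (N K : ℕ) (hN : 0 < N) (hK : 0 < K)
    (σ : Fin N → Fin N) (hσinv : ∀ i, σ (σ i) = i) (hσnf : ∀ i, σ i ≠ i)
    (p : Fin K → ℝ) (hp0 : ∀ k, 0 ≤ p k) (hp1 : ∀ k, p k ≤ 1)
    (hpsum : ∑ k, p k = 1)
    (W : Fin N → Ω → Fin K) (hWmeas : ∀ i, Measurable (W i))
    -- the `W i` are independent and identically distributed with law `p`:
    (hindep : iIndepFun W μ)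
    (hlaw : ∀ i k, μ {ω | W i ω = k} = ENNReal.ofReal (p k))
    (m ℓ : Fin K) (ε : ℝ) (hε : 0 < ε) :
    μ {ω | ε <
        |(1 / (N : ℝ)) * ∑ i : Fin N,
          (if W i ω = m then (1 : ℝ) else 0) *
            (if W (σ i) ω = ℓ then (1 : ℝ) else 0) - p m * p ℓ|} ≤
      ENNReal.ofReal (2 * Real.exp (-(N : ℝ) * ε ^ 2)) :=
  single_matching_concentration_general μ N K σ hσinv hσnf p hp0 W hWmeas hindep hlaw m ℓ ε hε
end

section
/- Let N, d, K be positive integers, let σ_1, …, σ_d : Fin N → Fin N be fixed-point-free involutions (permutations with σ_t ∘ σ_t = id and σ_t i ≠ i for all i), let p : Fin K → [0,1] be a probability vector (∑_k p_k = 1), and let (W_i)_{i∈Fin N} be i.i.d. Fin K-valued random variables with P(W_i = k) = p_k for all i and k. Then for every m, ℓ ∈ Fin K and every ε > 0: P( | (1/N) ∑_{t=1}^d ∑_{i∈Fin N} 1{W_i = m}·1{W_{σ_t i} = ℓ} − d·p_m p_ℓ | > ε ) ≤ 2d·exp(−N ε²/d²). In particular, the bound decays exponentially in N at a rate depending only on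 ε and d, uniformly over the probability vector p. -/
/-!
For one perfect matching `σ`, group the summands of `∑ i, 1{W i = m} 1{W (σ i) = ℓ}` by the
edges `{i, σ i}`: this writes the count as a sum of `N / 2` pair variables with values in
`[0, 2]`, and distinct edges involve disjoint sets of coordinates, so the pair variables are
independent. Hoeffding's inequality then bounds the probability that the count deviates from
its mean `N pₘ p_ℓ` by `s` by `2 exp (-s² / N)`, whatever `p` is. If the normalized count along
all `d` matchings deviates from `d pₘ p_ℓ` by more than `ε`, one of the `d` single-matching
counts deviates by at least `N ε / d`, and a union bound over the matchings concludes.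
-/

open MeasureTheory ProbabilityTheory Finset

lemma exists_le_abs_sub_of_lt_abs_average {d : ℕ} (x : Fin d → ℝ) {N ε c : ℝ} (hN : 0 < N)
    (hε : 0 ≤ ε) (h : ε < |(1 / N) * ∑ t, x t - d * c|) : ∃ t, N * ε / d ≤ |x t - N * c| := by
  by_contra! hlt
  have hrw : (1 / N) * ∑ t, x t - d * c = (1 / N) * ∑ t, (x t - N * c) := by
    rw [sum_sub_distrib, sum_const, card_univ, Fintype.card_fin, nsmul_eq_mul]
    field_simp
  have hdε : (d : ℝ) * (N * ε / d) ≤ N * ε := by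
    rcases eq_or_ne (d : ℝ) 0 with hd | hd
    · rw [hd, zero_mul]
      positivity
    · rw [mul_div_cancel₀ _ hd]
  refine h.not_ge ?_
  calc |(1 / N) * ∑ t, x t - d * c| = (1 / N) * |∑ t, (x t - N * c)| := by
        rw [hrw, abs_mul, abs_of_pos (by positivity)]
    _ ≤ (1 / N) * ∑ t, |x t - N * c| := by gcongr; exact abs_sum_le_sum_abs _ _
    _ ≤ (1 / N) * ∑ _t : Fin d, N * ε / d := by gcongr with t; exact (hlt t).le
    _ ≤ ε := by
        rw [sum_const, card_univ, Fintype.card_fin, nsmul_eq_mul, one_div, inv_mul_le_iff₀ hN]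
        exact hdε

section Matching

variable {α : Type*} [Fintype α] [LinearOrder α] {σ : α → α}

def matchingReps (σ : α → α) : Finset α := {i | i < σ i}

lemma mem_matchingReps {i : α} : i ∈ matchingReps σ ↔ i < σ i := by
  simp [matchingReps]

lemma apply_notMem_matchingReps (hσ : Function.Involutive σ) {i : α} (hi : i ∈ matchingReps σ) :
    σ i ∉ matchingReps σ := by
  rw [mem_matchingReps] at hi ⊢
  rw [hσ i]
  exact hi.asymm

lemma image_matchingReps (hσ : Function.Involutive σ) (hfix : ∀ i, σ i ≠ i) :
    (matchingReps σ).image σ = (matchingReps σ)ᶜ := by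
  ext j
  simp only [mem_image, mem_compl, mem_matchingReps, not_lt]
  constructor
  · rintro ⟨i, hi, rfl⟩
    rw [hσ i]
    exact hi.le
  · exact fun hj => ⟨σ j, by rw [hσ j]; exact lt_of_le_of_ne hj (hfix j), hσ j⟩

lemma sum_eq_sum_matchingReps {M : Type*} [AddCommMonoid M] (hσ : Function.Involutive σ)
    (hfix : ∀ i, σ i ≠ i) (f : α → M) :
    ∑ i, f i = ∑ i ∈ matchingReps σ, (f i + f (σ i)) := by
  rw [sum_add_distrib, ← sum_add_sum_compl (matchingReps σ), ← image_matchingReps hσ hfix,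
    sum_image hσ.injective.injOn]

lemma two_mul_card_matchingReps (hσ : Function.Involutive σ) (hfix : ∀ i, σ i ≠ i) :
    2 * #(matchingReps σ) = Fintype.card α := by
  have := sum_eq_sum_matchingReps hσ hfix (fun _ => (1 : ℕ))
  simp only [sum_const, card_univ, smul_eq_mul, mul_one] at this
  omega

lemma disjoint_pair_biUnion_matchingReps (hσ : Function.Involutive σ) {a : α}
    (ha : a ∈ matchingReps σ) {s : Finset α} (hs : s ⊆ matchingReps σ) (has : a ∉ s) :
    Disjoint {a, σ a} (s.biUnion fun j => {j, σ j}) := by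
  simp only [disjoint_biUnion_right, disjoint_insert_left, disjoint_singleton_left, mem_insert,
    mem_singleton, not_or]
  intro j hj
  have hja : j ≠ a := fun h => has (h ▸ hj)
  refine ⟨⟨hja.symm, fun h => apply_notMem_matchingReps hσ (hs hj) (h ▸ ha)⟩,
    fun h => apply_notMem_matchingReps hσ ha (h ▸ hs hj), fun h => hja (hσ.injective h).symm⟩

end Matching

namespace ProbabilityTheory

open scoped NNReal

variable {Ω : Type*} [MeasurableSpace Ω] {μ : Measure Ω}

lemma HasSubgaussianMGF.measure_abs_ge_le_s3 [IsFiniteMeasure μ] {X : Ω → ℝ} {c : ℝ≥0}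
    (h : HasSubgaussianMGF X c μ) {ε : ℝ} (hε : 0 ≤ ε) :
    μ {ω | ε ≤ |X ω|} ≤ ENNReal.ofReal (2 * Real.exp (-ε ^ 2 / (2 * c))) := by
  have hsplit : {ω | ε ≤ |X ω|} = {ω | ε ≤ X ω} ∪ {ω | ε ≤ (-X) ω} := by
    ext ω
    simp [le_abs]
  rw [← ofReal_measureReal, hsplit, two_mul]
  gcongr
  exact (measureReal_union_le _ _).trans (add_le_add (h.measure_ge_le hε) (h.neg.measure_ge_le hε))

lemma HasSubgaussianMGF.sum_of_indepFun_sum [IsZeroOrProbabilityMeasure μ] {ι : Type*}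
    {Z : ι → Ω → ℝ} {c : ι → ℝ≥0} {s : Finset ι}
    (hZ : ∀ i ∈ s, HasSubgaussianMGF (Z i) (c i) μ)
    (hindep : ∀ t ⊆ s, ∀ a ∈ s, a ∉ t → IndepFun (Z a) (fun ω => ∑ i ∈ t, Z i ω) μ) :
    HasSubgaussianMGF (fun ω => ∑ i ∈ s, Z i ω) (∑ i ∈ s, c i) μ := by
  classical
  induction s using Finset.induction_on with
  | empty => simp
  | insert a s has ih =>
    have hs : HasSubgaussianMGF (fun ω => ∑ i ∈ s, Z i ω) (∑ i ∈ s, c i) μ :=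
      ih (fun i hi => hZ i (mem_insert_of_mem hi)) fun t ht b hb hbt =>
        hindep t (ht.trans (subset_insert a s)) b (mem_insert_of_mem hb) hbt
    simp only [sum_insert has]
    exact (hZ a (mem_insert_self a s)).add_of_indepFun hs
      (hindep s (subset_insert a s) a (mem_insert_self a s) has)

lemma iIndepFun.indepFun_pair_sum {α β : Type*} [DecidableEq α] [MeasurableSpace β]
    {X : α → Ω → β} (hX : iIndepFun X μ) (hXm : ∀ i, Measurable (X i)) {g : α → β → β → ℝ}
    (hg : ∀ i, Measurable (Function.uncurry (g i))) {σ : α → α} {a : α} {s : Finset α}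
    (hdisj : Disjoint {a, σ a} (s.biUnion fun j => {j, σ j})) :
    IndepFun (fun ω => g a (X a ω) (X (σ a) ω))
      (fun ω => ∑ j ∈ s, g j (X j ω) (X (σ j) ω)) μ := by
  set T := s.biUnion fun j => {j, σ j}
  have hT : ∀ j ∈ s, j ∈ T ∧ σ j ∈ T := fun j hj =>
    ⟨mem_biUnion.2 ⟨j, hj, by simp⟩, mem_biUnion.2 ⟨j, hj, by simp⟩⟩
  have hφ : Measurable fun v : ({a, σ a} : Finset α) → β =>
      g a (v ⟨a, by simp⟩) (v ⟨σ a, by simp⟩) :=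
    (hg a).comp (f := fun v : ({a, σ a} : Finset α) → β => (v ⟨a, _⟩, v ⟨σ a, _⟩))
      ((measurable_pi_apply _).prodMk (measurable_pi_apply _))
  have hψ : Measurable fun v : T → β =>
      ∑ j : s, g j (v ⟨j, (hT j j.2).1⟩) (v ⟨σ j, (hT j j.2).2⟩) :=
    Finset.measurable_sum _ fun j _ =>
      (hg j).comp (f := fun v : T → β => (v ⟨j, _⟩, v ⟨σ j, _⟩))
        ((measurable_pi_apply _).prodMk (measurable_pi_apply _))
  convert (hX.indepFun_finset {a, σ a} T hdisj hXm).comp hφ hψ using 1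
  · rfl
  ext ω
  exact (sum_coe_sort s fun j => g j (X j ω) (X (σ j) ω)).symm

lemma IndepFun.integral_ite_mul_ite [IsProbabilityMeasure μ] {β : Type*} [MeasurableSpace β]
    [MeasurableSingletonClass β] [DecidableEq β] {X Y : Ω → β} (h : IndepFun X Y μ)
    (hX : Measurable X) (hY : Measurable Y) (a b : β) :
    ∫ ω, (if X ω = a then (1 : ℝ) else 0) * (if Y ω = b then (1 : ℝ) else 0) ∂μ =
      μ.real {ω | X ω = a} * μ.real {ω | Y ω = b} := by
  have hind : ∀ (Z : Ω → β) c,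
      (fun ω => if Z ω = c then (1 : ℝ) else 0) = (Z ⁻¹' {c}).indicator 1 := fun Z c => by
    funext ω
    by_cases hω : Z ω = c <;> simp [hω]
  have hite : ∀ c : β, Measurable fun x : β => if x = c then (1 : ℝ) else 0 := fun c =>
    Measurable.ite (measurableSet_singleton c) measurable_const measurable_const
  have := h.integral_comp_mul_comp hX.aemeasurable hY.aemeasurable
    (hite a).aestronglyMeasurable (hite b).aestronglyMeasurable
  simp only [Pi.mul_apply, Function.comp_apply] at this
  rw [this, hind X, hind Y, integral_indicator_one (hX (measurableSet_singleton a)),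
    integral_indicator_one (hY (measurableSet_singleton b))]
  rfl

theorem measure_abs_sum_matching_sub_ge_le [IsProbabilityMeasure μ] {α β : Type*} [Fintype α]
    [LinearOrder α] [MeasurableSpace β] {X : α → Ω → β} (hX : iIndepFun X μ)
    (hXm : ∀ i, Measurable (X i)) {g : β → β → ℝ} (hg : Measurable (Function.uncurry g))
    (hg01 : ∀ x y, g x y ∈ Set.Icc 0 1) {σ : α → α} (hσ : Function.Involutive σ)
    (hfix : ∀ i, σ i ≠ i) {s : ℝ} (hs : 0 ≤ s) :
    μ {ω | s ≤ |∑ i, g (X i ω) (X (σ i) ω) - ∑ i, ∫ ω, g (X i ω) (X (σ i) ω) ∂μ|} ≤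
      ENNReal.ofReal (2 * Real.exp (-s ^ 2 / Fintype.card α)) := by
  set R := matchingReps σ
  set Z : α → Ω → ℝ := fun i ω => g (X i ω) (X (σ i) ω) + g (X (σ i) ω) (X i ω)
  have hGm : ∀ i j, Measurable fun ω => g (X i ω) (X j ω) := fun i j =>
    hg.comp (f := fun ω => (X i ω, X j ω)) ((hXm i).prodMk (hXm j))
  have hGint : ∀ i j, Integrable (fun ω => g (X i ω) (X j ω)) μ := fun i j =>
    Integrable.of_mem_Icc 0 1 (hGm i j).aemeasurable (ae_of_all _ fun ω => hg01 _ _)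
  have hZ : ∀ i, HasSubgaussianMGF (fun ω => Z i ω - μ[Z i]) 1 μ := by
    intro i
    have hZ02 : ∀ ω, Z i ω ∈ Set.Icc 0 2 := fun ω => by
      have h1 := hg01 (X i ω) (X (σ i) ω)
      have h2 := hg01 (X (σ i) ω) (X i ω)
      constructor <;> linarith [h1.1, h1.2, h2.1, h2.2]
    have hc : (‖(2 : ℝ) - 0‖₊ / 2) ^ 2 = 1 := by norm_num
    have hZm : Measurable (Z i) := (hGm _ _).add (hGm _ _)
    simpa only [hc] using hasSubgaussianMGF_of_mem_Icc hZm.aemeasurable (ae_of_all _ hZ02)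
  have hsum : ∀ ω, ∑ i, g (X i ω) (X (σ i) ω) - ∑ i, ∫ ω, g (X i ω) (X (σ i) ω) ∂μ =
      ∑ i ∈ R, (Z i ω - μ[Z i]) := by
    intro ω
    rw [sum_eq_sum_matchingReps hσ hfix (fun i => g (X i ω) (X (σ i) ω)),
      sum_eq_sum_matchingReps hσ hfix (fun i => ∫ ω, g (X i ω) (X (σ i) ω) ∂μ),
      ← sum_sub_distrib]
    refine sum_congr rfl fun i _ => ?_
    simp only [Z, hσ i, integral_add (hGint _ _) (hGint _ _)]
  have hindep : ∀ t ⊆ R, ∀ a ∈ R, a ∉ t →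
      IndepFun (fun ω => Z a ω - μ[Z a]) (fun ω => ∑ i ∈ t, (Z i ω - μ[Z i])) μ :=
    fun t ht a ha hat => hX.indepFun_pair_sum hXm (g := fun i x y => g x y + g y x - μ[Z i])
      (fun i => (hg.add (hg.comp measurable_swap)).sub_const _)
      (disjoint_pair_biUnion_matchingReps hσ ha ht hat)
  have hR := (HasSubgaussianMGF.sum_of_indepFun_sum (fun i _ => hZ i) hindep).measure_abs_ge_le_s3 hs
  have hcard : (2 * ((∑ _i ∈ R, 1 : ℝ≥0) : ℝ)) = Fintype.card α := by
    push_cast [sum_const, nsmul_eq_mul, mul_one]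
    exact_mod_cast two_mul_card_matchingReps hσ hfix
  simpa only [hcard, ← hsum] using hR

theorem measure_abs_matching_count_sub_ge_le [IsProbabilityMeasure μ] {α κ : Type*} [Fintype α]
    [LinearOrder α] [MeasurableSpace κ] [MeasurableSingletonClass κ] [DecidableEq κ]
    {W : α → Ω → κ} (hW : iIndepFun W μ) (hWm : ∀ i, Measurable (W i)) {p : κ → ℝ}
    (hp0 : ∀ k, 0 ≤ p k) (hlaw : ∀ i k, μ {ω | W i ω = k} = ENNReal.ofReal (p k))
    {σ : α → α} (hσ : Function.Involutive σ) (hfix : ∀ i, σ i ≠ i) (m ℓ : κ) {s : ℝ}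
    (hs : 0 ≤ s) :
    μ {ω | s ≤ |∑ i, (if W i ω = m then (1 : ℝ) else 0) * (if W (σ i) ω = ℓ then (1 : ℝ) else 0)
        - Fintype.card α * (p m * p ℓ)|} ≤
      ENNReal.ofReal (2 * Real.exp (-s ^ 2 / Fintype.card α)) := by
  have hlawReal : ∀ i k, μ.real {ω | W i ω = k} = p k := fun i k => by
    rw [measureReal_def, hlaw, ENNReal.toReal_ofReal (hp0 k)]
  have hmean : ∀ i, ∫ ω, (if W i ω = m then (1 : ℝ) else 0) *
      (if W (σ i) ω = ℓ then (1 : ℝ) else 0) ∂μ = p m * p ℓ := fun i => by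
    rw [(hW.indepFun (hfix i).symm).integral_ite_mul_ite (hWm _) (hWm _), hlawReal, hlawReal]
  have hg : Measurable fun x : κ × κ =>
      (if x.1 = m then (1 : ℝ) else 0) * (if x.2 = ℓ then (1 : ℝ) else 0) :=
    (Measurable.ite (measurable_fst (measurableSet_singleton m)) measurable_const
      measurable_const).mul
      (Measurable.ite (measurable_snd (measurableSet_singleton ℓ)) measurable_const
        measurable_const)
  have h := measure_abs_sum_matching_sub_ge_le hW hWm
    (g := fun x y => (if x = m then (1 : ℝ) else 0) * (if y = ℓ then (1 : ℝ) else 0))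
    hg (fun x y => by constructor <;> split_ifs <;> norm_num) hσ hfix hs
  simpa only [hmean, sum_const, card_univ, nsmul_eq_mul] using h

end ProbabilityTheory

theorem regular_graph_matching_concentration_general
    {Ω : Type*} [MeasurableSpace Ω] (μ : Measure Ω) [IsProbabilityMeasure μ]
    (N d K : ℕ) (hN : 0 < N)
    (σ : Fin d → Fin N → Fin N)
    (hσinv : ∀ t i, σ t (σ t i) = i) (hσnf : ∀ t i, σ t i ≠ i)
    (p : Fin K → ℝ) (hp0 : ∀ k, 0 ≤ p k)
    (W : Fin N → Ω → Fin K) (hWmeas : ∀ i, Measurable (W i))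
    -- the `W i` are independent and identically distributed with law `p`:
    (hindep : iIndepFun W μ)
    (hlaw : ∀ i k, μ {ω | W i ω = k} = ENNReal.ofReal (p k))
    (m ℓ : Fin K) (ε : ℝ) (hε : 0 < ε) :
    μ {ω | ε <
        |(1 / (N : ℝ)) * ∑ t : Fin d, ∑ i : Fin N,
          (if W i ω = m then (1 : ℝ) else 0) *
            (if W (σ t i) ω = ℓ then (1 : ℝ) else 0) - (d : ℝ) * (p m * p ℓ)|} ≤
      ENNReal.ofReal (2 * (d : ℝ) * Real.exp (-(N : ℝ) * ε ^ 2 / (d : ℝ) ^ 2)) := by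
  have hNpos : (0 : ℝ) < N := by exact_mod_cast hN
  have hs : 0 ≤ (N : ℝ) * ε / d := by positivity
  have hexp : -(N * ε / d) ^ 2 / N = -(N : ℝ) * ε ^ 2 / (d : ℝ) ^ 2 := by field_simp
  set s := (N : ℝ) * ε / d
  calc _ ≤ μ (⋃ t, {ω | s ≤ |∑ i, (if W i ω = m then (1 : ℝ) else 0) *
        (if W (σ t i) ω = ℓ then (1 : ℝ) else 0) - N * (p m * p ℓ)|}) :=
        measure_mono fun ω hω =>
          Set.mem_iUnion.2 (exists_le_abs_sub_of_lt_abs_average _ hNpos hε.le hω)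
    _ ≤ ∑ _t : Fin d, ENNReal.ofReal (2 * Real.exp (-s ^ 2 / N)) := by
        refine (measure_iUnion_fintype_le _ _).trans (sum_le_sum fun t _ => ?_)
        simpa only [Fintype.card_fin] using
          measure_abs_matching_count_sub_ge_le hindep hWmeas hp0 hlaw (hσinv t) (hσnf t) m ℓ hs
    _ = _ := by
        rw [sum_const, card_univ, Fintype.card_fin, nsmul_eq_mul, ← ENNReal.ofReal_natCast,
          ← ENNReal.ofReal_mul (by positivity), hexp, mul_left_comm, mul_assoc]

/-- Lemma 4.1 of the paper: if `σ 1, …, σ d` are fixed-point-free involutions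
of `Fin N` (encoding `d` perfect matchings of a `d`-regular graph) and the
`(W i)_i` are i.i.d. `Fin K`-valued with law `p`, then the normalized quadratic
interaction count `(1/N) ∑ t, ∑ i, 1{W i = m} 1{W (σ t i) = ℓ}` concentrates at
`d * p m * p ℓ` with bound `2 d exp (-N ε² / d²)`, uniformly in `p`. -/
theorem regular_graph_matching_concentration
    {Ω : Type*} [MeasurableSpace Ω] (μ : Measure Ω) [IsProbabilityMeasure μ]
    (N d K : ℕ) (hN : 0 < N) (hd : 0 < d) (hK : 0 < K)
    (σ : Fin d → Fin N → Fin N)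
    (hσinv : ∀ t i, σ t (σ t i) = i) (hσnf : ∀ t i, σ t i ≠ i)
    (p : Fin K → ℝ) (hp0 : ∀ k, 0 ≤ p k) (hp1 : ∀ k, p k ≤ 1)
    (hpsum : ∑ k, p k = 1)
    (W : Fin N → Ω → Fin K) (hWmeas : ∀ i, Measurable (W i))
    -- the `W i` are independent and identically distributed with law `p`:
    (hindep : iIndepFun W μ)
    (hlaw : ∀ i k, μ {ω | W i ω = k} = ENNReal.ofReal (p k))
    (m ℓ : Fin K) (ε : ℝ) (hε : 0 < ε) :
    μ {ω | ε <
        |(1 / (N : ℝ)) * ∑ t : Fin d, ∑ i : Fin N,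
          (if W i ω = m then (1 : ℝ) else 0) *
            (if W (σ t i) ω = ℓ then (1 : ℝ) else 0) - (d : ℝ) * (p m * p ℓ)|} ≤
      ENNReal.ofReal (2 * (d : ℝ) * Real.exp (-(N : ℝ) * ε ^ 2 / (d : ℝ) ^ 2)) :=
  regular_graph_matching_concentration_general μ N d K hN σ hσinv hσnf p hp0 W hWmeas hindep hlaw m
    ℓ ε hε
end

section
/- Let N, d, K be positive integers, let σ_1, …, σ_d : Fin N → Fin N be fixed-point-free involutions (permutations with σ_t ∘ σ_t = id and σ_t i ≠ i for all i), and for u : Fin N → Fin K and m, ℓ ∈ Fin K set Q_{m,ℓ}(u) = (1/N) ∑_{t=1}^d ∑_{i∈Fin N} 1{u i = m}·1{u(σ_t i) = ℓ}. Let n : Fin K → ℕ with ∑_k n_k = N, and fix w : Fin N → Fin K whose fiber over each k has exactly n_k elements. Then for every ε > 0 there exist constants C, c > 0, depending only on ε and d (not on N, K, n, w, the matchings, or the joint law), such that the following holds: whenever V and W are random maps Fin N → Fin K defined on a common probability space (with arbitrary dependence between V and W), where V is distributed as w ∘ π for π a uniformly distributed random permutation of Fin N, and W has i.i.d. coordinates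 with P(W_i = k) = n_k/N for all i and k, one has P( | Q_{m,ℓ}(V) − Q_{m,ℓ}(W) | > ε ) ≤ C·exp(−c N) for all m, ℓ ∈ Fin K. -/
/-!
The coupling plays no role: a union bound reduces the claim to concentration of `Q(V)` and of
`Q(W)` around their means, together with the fact that the two means are `O(d / N)` apart.

Since every site lies on exactly two edges of each matching, changing one coordinate of `u`
moves `Q(u)` by at most `2d/N`. For the i.i.d. vector `W` this gives McDiarmid's martingale
bound, and for `w ∘ π` the same argument runs along the decomposition of a uniform permutation
of `Fin (n + 1)` into the uniform image of `0` and an independent uniform permutation of the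
remaining points (a transposition moves `Q` by at most `4d/N`). Each martingale step is
Hoeffding's lemma, so both counts have sub-Gaussian tails with variance proxy `O(d² / N)`.

Both means are `d` times a pair probability, because `σ t i ≠ i`: for i.i.d. sites it is
`n_m n_ℓ / N²`, and for a uniform pair of distinct sites it is
`(n_m n_ℓ - δ_{mℓ} n_m) / (N (N - 1))`.
-/

open MeasureTheory ProbabilityTheory ENNReal

open Finset Equiv

open Real (exp)

section WeightedMGF

open Real

variable {ι κ : Type*} [Fintype ι] [Fintype κ]

theorem sum_mul_const_of_mem_stdSimplex {q : ι → ℝ} (hq : q ∈ stdSimplex ℝ ι) (a : ℝ) :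
    ∑ i, q i * a = a := by
  rw [← sum_mul, hq.2, one_mul]

/-- Hoeffding's lemma for a finitely supported law. -/
theorem sum_mul_exp_le_of_abs_le {q y : ι → ℝ} {B : ℝ} (hq : q ∈ stdSimplex ℝ ι)
    (hy0 : ∑ i, q i * y i = 0) (hy : ∀ i, |y i| ≤ B) (t : ℝ) :
    ∑ i, q i * exp (t * y i) ≤ exp (t ^ 2 * B ^ 2 / 2) := by
  rcases le_or_gt B 0 with hB | hB
  · have hy_zero : ∀ i, y i = 0 := fun i => abs_nonpos_iff.1 ((hy i).trans hB)
    simp only [hy_zero, mul_zero, Real.exp_zero, mul_one, hq.2]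
    exact one_le_exp (by positivity)
  have hchord : ∀ i, exp (t * y i) ≤ cosh (t * B) + y i / B * sinh (t * B) := fun i => by
    have h := exp_mul_le_cosh_add_mul_sinh (t := y i / B) (x := t * B)
      (by rw [abs_div, abs_of_pos hB, div_le_one hB]; exact hy i)
    rwa [show y i / B * (t * B) = t * y i by field_simp] at h
  calc ∑ i, q i * exp (t * y i)
      ≤ ∑ i, q i * (cosh (t * B) + y i / B * sinh (t * B)) :=
        sum_le_sum fun i _ => mul_le_mul_of_nonneg_left (hchord i) (hq.1 i)
    _ = cosh (t * B) + (∑ i, q i * y i) / B * sinh (t * B) := by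
        simp only [mul_add, sum_add_distrib, sum_mul_const_of_mem_stdSimplex hq, sum_div, sum_mul]
        congr 1
        exact sum_congr rfl fun i _ => by ring
    _ ≤ exp (t ^ 2 * B ^ 2 / 2) := by
        rw [hy0, zero_div, zero_mul, add_zero]
        exact (cosh_le_exp_half_sq _).trans_eq (by ring_nf)

theorem abs_sub_sum_mul_le_of_sub_le {q g : ι → ℝ} {B : ℝ} (hq : q ∈ stdSimplex ℝ ι)
    (hg : ∀ x y, g x - g y ≤ B) (x : ι) : |g x - ∑ y, q y * g y| ≤ B := by
  have hmean : ∀ a : ι → ℝ, (∀ y, a y ≤ B) → ∑ y, q y * a y ≤ B := fun a ha =>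
    (sum_le_sum fun y _ => mul_le_mul_of_nonneg_left (ha y) (hq.1 y)).trans_eq
      (sum_mul_const_of_mem_stdSimplex hq B)
  have hup := hmean _ (hg x)
  have hdown := hmean _ (hg · x)
  simp only [mul_sub, sum_sub_distrib, sum_mul_const_of_mem_stdSimplex hq] at hup hdown
  exact abs_sub_le_iff.2 ⟨hup, hdown⟩

/-- One step of the martingale argument behind McDiarmid's inequality. -/
theorem sum_mul_sum_mul_exp_le {q : ι → ℝ} {r : κ → ℝ} (hq : q ∈ stdSimplex ℝ ι)
    (hr : r ∈ stdSimplex ℝ κ) (f : ι → κ → ℝ) {B M : ℝ} (hf : ∀ x y v, f x v - f y v ≤ B)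
    (t : ℝ) (hinner : ∀ x, ∑ v, r v * exp (t * f x v) ≤ exp (t * ∑ v, r v * f x v + M)) :
    ∑ x, q x * ∑ v, r v * exp (t * f x v) ≤
      exp (t * ∑ x, q x * ∑ v, r v * f x v + (t ^ 2 * B ^ 2 / 2 + M)) := by
  set g : ι → ℝ := fun x => ∑ v, r v * f x v
  set gbar := ∑ x, q x * g x
  have hg : ∀ x y, g x - g y ≤ B := fun x y => by
    calc g x - g y = ∑ v, r v * (f x v - f y v) := by simp only [g, mul_sub, sum_sub_distrib]
      _ ≤ ∑ v, r v * B := sum_le_sum fun v _ => mul_le_mul_of_nonneg_left (hf x y v) (hr.1 v)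
      _ = B := sum_mul_const_of_mem_stdSimplex hr B
  have hcentered : ∑ x, q x * (g x - gbar) = 0 := by
    simp only [mul_sub, sum_sub_distrib, sum_mul_const_of_mem_stdSimplex hq, gbar, sub_self]
  calc ∑ x, q x * ∑ v, r v * exp (t * f x v)
      ≤ ∑ x, q x * (exp (t * gbar + M) * exp (t * (g x - gbar))) := by
        refine sum_le_sum fun x _ => mul_le_mul_of_nonneg_left ?_ (hq.1 x)
        rw [← Real.exp_add]
        exact (hinner x).trans_eq (congrArg exp (by ring))
    _ = exp (t * gbar + M) * ∑ x, q x * exp (t * (g x - gbar)) := by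
        rw [Finset.mul_sum univ _ (exp (t * gbar + M))]
        exact sum_congr rfl fun x _ => by ring
    _ ≤ exp (t * gbar + M) * exp (t ^ 2 * B ^ 2 / 2) :=
        mul_le_mul_of_nonneg_left (sum_mul_exp_le_of_abs_le hq hcentered
          (abs_sub_sum_mul_le_of_sub_le hq hg) t) (exp_nonneg _)
    _ = _ := by rw [← Real.exp_add]; ring_nf

end WeightedMGF

section ProductWeights

open Real

variable {α : Type*} [Fintype α] {p : α → ℝ}

theorem prod_mem_stdSimplex {ι : Type*} [Fintype ι] [DecidableEq ι] (hp : p ∈ stdSimplex ℝ α) :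
    (fun u : ι → α => ∏ i, p (u i)) ∈ stdSimplex ℝ (ι → α) :=
  ⟨fun _ => prod_nonneg fun _ _ => hp.1 _, by
    rw [← Fintype.prod_sum (fun (_ : ι) (k : α) => p k), hp.2, prod_const_one]⟩

theorem sum_prod_mul_fin_succ {n : ℕ} (p : α → ℝ) (F : (Fin (n + 1) → α) → ℝ) :
    ∑ u, (∏ i, p (u i)) * F u =
      ∑ x, p x * ∑ v : Fin n → α, (∏ i, p (v i)) * F (Fin.cons x v) := by
  rw [← (Fin.consEquiv fun _ => α).sum_comp, Fintype.sum_prod_type]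
  refine sum_congr rfl fun x _ => ?_
  rw [mul_sum]
  exact sum_congr rfl fun v _ => by simp [Fin.consEquiv, Fin.prod_univ_succ, mul_assoc]

/-- McDiarmid's bounded differences inequality, in exponential-moment form. -/
theorem sum_prod_mul_exp_le (hp : p ∈ stdSimplex ℝ α) {c : ℝ} {n : ℕ}
    (f : (Fin n → α) → ℝ) (hf : ∀ u i x, |f (Function.update u i x) - f u| ≤ c) (t : ℝ) :
    ∑ u, (∏ i, p (u i)) * exp (t * f u) ≤
      exp (t * ∑ u, (∏ i, p (u i)) * f u + n * (t ^ 2 * c ^ 2 / 2)) := by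
  induction n with
  | zero => simp
  | succ n ih =>
    rw [sum_prod_mul_fin_succ, sum_prod_mul_fin_succ, Nat.cast_succ, add_one_mul,
      add_comm _ (t ^ 2 * c ^ 2 / 2)]
    refine sum_mul_sum_mul_exp_le hp (prod_mem_stdSimplex hp) (fun x v => f (Fin.cons x v))
      (fun x y v => ?_) t (fun x => ih _ fun v i y => ?_)
    · have h := hf (Fin.cons y v) 0 x
      rw [Fin.update_cons_zero] at h
      exact (le_abs_self _).trans h
    · rw [Fin.cons_update]
      exact hf _ _ _

theorem sum_prod_mul_ite_mul_ite {ι : Type*} [Fintype ι] [DecidableEq ι] [DecidableEq α]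
    (hp : p ∈ stdSimplex ℝ α) {i j : ι} (hij : i ≠ j) (m ℓ : α) :
    ∑ u : ι → α, (∏ k, p (u k)) *
      ((if u i = m then (1 : ℝ) else 0) * (if u j = ℓ then (1 : ℝ) else 0)) = p m * p ℓ := by
  let h : ι → α → ℝ := fun k a =>
    p a * ((if k = i then (if a = m then 1 else 0) else 1) *
      (if k = j then (if a = ℓ then 1 else 0) else 1))
  have hfactor : ∀ u : ι → α, ∏ k, h k (u k) = (∏ k, p (u k)) *
      ((if u i = m then (1 : ℝ) else 0) * (if u j = ℓ then (1 : ℝ) else 0)) := fun u => by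
    simp only [h, prod_mul_distrib, Fintype.prod_ite_eq']
  have hmarginal : ∀ k, ∑ a, h k a = (if k = i then p m else 1) * (if k = j then p ℓ else 1) :=
    fun k => by by_cases hki : k = i <;> by_cases hkj : k = j <;> simp_all [h, hp.2]
  simp only [← hfactor, ← Fintype.prod_sum, hmarginal, prod_mul_distrib, Fintype.prod_ite_eq']

theorem natCast_div_mem_stdSimplex {n : α → ℕ} {N : ℕ} (hN : 0 < N) (hn : ∑ k, n k = N) :
    (fun k => (n k : ℝ) / N) ∈ stdSimplex ℝ α :=
  ⟨fun _ => by positivity, by rw [← sum_div, ← Nat.cast_sum, hn, div_self (by positivity)]⟩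

end ProductWeights

section UniformPermutations

theorem inv_card_mem_stdSimplex (ι : Type*) [Fintype ι] [Nonempty ι] :
    (fun _ : ι => (Fintype.card ι : ℝ)⁻¹) ∈ stdSimplex ℝ ι :=
  ⟨fun _ => by positivity, by simp⟩

theorem sum_inv_card_mul_of_equiv {X Y Z : Type*} [Fintype X] [Fintype Y] [Fintype Z]
    (Φ : X × Y ≃ Z) (F : Z → ℝ) :
    ∑ z, (Fintype.card Z : ℝ)⁻¹ * F z =
      ∑ x, (Fintype.card X : ℝ)⁻¹ * ∑ y, (Fintype.card Y : ℝ)⁻¹ * F (Φ (x, y)) := by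
  rw [← Φ.sum_comp, Fintype.sum_prod_type, ← Fintype.card_congr Φ, Fintype.card_prod]
  simp only [Nat.cast_mul, mul_inv, mul_sum, mul_assoc]

theorem decomposeFin_symm_eq_swap_mul {n : ℕ} (p : Fin (n + 1)) (s : Perm (Fin n)) :
    Perm.decomposeFin.symm (p, s) = swap 0 p * Perm.decomposeFin.symm (0, s) := by
  ext j
  refine Fin.cases ?_ (fun j => ?_) j <;>
    simp [Perm.decomposeFin_symm_apply_zero, Perm.decomposeFin_symm_apply_succ]

theorem decomposeFin_symm_zero_mul {n : ℕ} (s s' : Perm (Fin n)) :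
    Perm.decomposeFin.symm (0, s * s') =
      Perm.decomposeFin.symm (0, s) * Perm.decomposeFin.symm (0, s') := by
  ext j
  refine Fin.cases ?_ (fun j => ?_) j <;>
    simp [Perm.decomposeFin_symm_apply_zero, Perm.decomposeFin_symm_apply_succ]

theorem decomposeFin_symm_zero_swap {n : ℕ} (a b : Fin n) :
    Perm.decomposeFin.symm (0, swap a b) = swap a.succ b.succ := by
  ext j
  refine Fin.cases ?_ (fun j => ?_) j
  · simp [Perm.decomposeFin_symm_apply_zero,
      swap_apply_of_ne_of_ne (Fin.succ_ne_zero a).symm (Fin.succ_ne_zero b).symm]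
  · simp [Perm.decomposeFin_symm_apply_succ, swap_apply_def, Fin.succ_inj]
    split_ifs <;> rfl

theorem decomposeFin_symm_swap_mul {n : ℕ} (p : Fin (n + 1)) (a b : Fin n) (s : Perm (Fin n)) :
    Perm.decomposeFin.symm (p, swap a b * s) =
      swap (swap 0 p a.succ) (swap 0 p b.succ) * Perm.decomposeFin.symm (p, s) := by
  rw [decomposeFin_symm_eq_swap_mul, decomposeFin_symm_zero_mul, decomposeFin_symm_zero_swap,
    decomposeFin_symm_eq_swap_mul p s, swap_apply_apply]
  group

/-- McDiarmid's inequality for a uniform permutation, revealed through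
`Perm.decomposeFin`: first the image of `0`, then a uniform permutation of the rest. -/
theorem sum_inv_card_perm_mul_exp_le {c : ℝ} {n : ℕ} (f : Perm (Fin n) → ℝ)
    (hf : ∀ e a b, |f (swap a b * e) - f e| ≤ c) (t : ℝ) :
    ∑ e, (Fintype.card (Perm (Fin n)) : ℝ)⁻¹ * exp (t * f e) ≤
      exp (t * ∑ e, (Fintype.card (Perm (Fin n)) : ℝ)⁻¹ * f e +
        n * (t ^ 2 * (2 * c) ^ 2 / 2)) := by
  induction n with
  | zero => simp
  | succ n ih =>
    rw [sum_inv_card_mul_of_equiv Perm.decomposeFin.symm, sum_inv_card_mul_of_equiv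
      Perm.decomposeFin.symm, Nat.cast_succ, add_one_mul, add_comm _ (t ^ 2 * (2 * c) ^ 2 / 2)]
    refine sum_mul_sum_mul_exp_le (inv_card_mem_stdSimplex _) (inv_card_mem_stdSimplex _)
      (fun p s => f (Perm.decomposeFin.symm (p, s))) (fun p p' s => ?_) t
      (fun p => ih _ fun s a b => ?_)
    · rw [decomposeFin_symm_eq_swap_mul p, decomposeFin_symm_eq_swap_mul p']
      have h := abs_le.1 (hf (Perm.decomposeFin.symm (0, s)) 0 p)
      have h' := abs_le.1 (hf (Perm.decomposeFin.symm (0, s)) 0 p')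
      linarith [h.2, h'.1]
    · rw [decomposeFin_symm_swap_mul]
      exact hf _ _ _

theorem exists_perm_apply_eq_apply_eq {α : Type*} [DecidableEq α] {i j a b : α} (hij : i ≠ j)
    (hab : a ≠ b) : ∃ ρ : Perm α, ρ i = a ∧ ρ j = b := by
  refine ⟨swap (swap i a j) b * swap i a, ?_, by simp⟩
  have hja : swap i a j ≠ a := by simpa using (swap i a).injective.ne hij.symm
  simp [swap_apply_of_ne_of_ne hja.symm hab]

/-- A uniform permutation maps a pair of distinct points to a uniform pair of distinct
points. -/
theorem card_offDiag_mul_sum_perm {α : Type*} [Fintype α] [DecidableEq α] (F : α → α → ℝ)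
    {i j : α} (hij : i ≠ j) :
    (#(univ : Finset α).offDiag : ℝ) * ∑ e : Perm α, F (e i) (e j) =
      Fintype.card (Perm α) * ∑ x ∈ (univ : Finset α).offDiag, F x.1 x.2 := by
  have hinv : ∀ x ∈ (univ : Finset α).offDiag, ∑ e : Perm α, F (e x.1) (e x.2) =
      ∑ e : Perm α, F (e i) (e j) := fun x hx => by
    obtain ⟨ρ, hρi, hρj⟩ := exists_perm_apply_eq_apply_eq hij (mem_offDiag.1 hx).2.2
    rw [← hρi, ← hρj]
    exact Equiv.sum_comp (Equiv.mulRight ρ) fun e : Perm α => F (e i) (e j)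
  have hreindex : ∀ e : Perm α, ∑ x ∈ (univ : Finset α).offDiag, F (e x.1) (e x.2) =
      ∑ x ∈ (univ : Finset α).offDiag, F x.1 x.2 := fun e =>
    sum_nbij' (Prod.map e e) (Prod.map e.symm e.symm) (by simp) (by simp) (by simp) (by simp)
      fun _ _ => rfl
  calc (#(univ : Finset α).offDiag : ℝ) * ∑ e : Perm α, F (e i) (e j)
      = ∑ x ∈ (univ : Finset α).offDiag, ∑ e : Perm α, F (e x.1) (e x.2) := by
        rw [sum_congr rfl hinv, sum_const, nsmul_eq_mul]
    _ = ∑ e : Perm α, ∑ x ∈ (univ : Finset α).offDiag, F x.1 x.2 := by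
        rw [sum_comm]
        exact sum_congr rfl fun e _ => hreindex e
    _ = _ := by rw [sum_const, card_univ, nsmul_eq_mul]

theorem sum_inv_card_perm_mul_ite_mul_ite {N : ℕ} {α : Type*} [DecidableEq α] (w : Fin N → α)
    {i j : Fin N} (hij : i ≠ j) (m ℓ : α) :
    ∑ e : Perm (Fin N), (Fintype.card (Perm (Fin N)) : ℝ)⁻¹ *
        ((if w (e i) = m then (1 : ℝ) else 0) * (if w (e j) = ℓ then (1 : ℝ) else 0)) =
      ((∑ a, if w a = m then (1 : ℝ) else 0) * (∑ b, if w b = ℓ then (1 : ℝ) else 0) -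
          ∑ a, (if w a = m then (1 : ℝ) else 0) * (if w a = ℓ then (1 : ℝ) else 0)) /
        (N * (N - 1)) := by
  have hN : (1 : ℝ) < N := by
    exact_mod_cast (Fintype.card_fin N) ▸ Fintype.one_lt_card_iff.2 ⟨i, j, hij⟩
  have hoff : (#(univ : Finset (Fin N)).offDiag : ℝ) = N * (N - 1) := by
    rw [offDiag_card, card_univ, Fintype.card_fin, Nat.cast_sub (Nat.le_mul_self N)]
    push_cast
    ring
  have hoff0 : (#(univ : Finset (Fin N)).offDiag : ℝ) ≠ 0 := by
    rw [hoff]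
    exact mul_ne_zero (by positivity) (by linarith)
  have hsplit : (∑ a, if w a = m then (1 : ℝ) else 0) * (∑ b, if w b = ℓ then (1 : ℝ) else 0) =
      ∑ a, (if w a = m then (1 : ℝ) else 0) * (if w a = ℓ then (1 : ℝ) else 0) +
        ∑ x ∈ (univ : Finset (Fin N)).offDiag,
          (if w x.1 = m then (1 : ℝ) else 0) * (if w x.2 = ℓ then (1 : ℝ) else 0) := by
    rw [sum_mul_sum, ← sum_product', ← diag_union_offDiag, sum_union (disjoint_diag_offDiag _),
      sum_diag]
  have hcard : (0 : ℝ) < Fintype.card (Perm (Fin N)) := by exact_mod_cast Fintype.card_pos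
  rw [hsplit, add_sub_cancel_left, ← hoff, eq_div_iff hoff0, ← mul_sum, mul_comm, mul_left_comm,
    card_offDiag_mul_sum_perm
      (fun a b => (if w a = m then (1 : ℝ) else 0) * (if w b = ℓ then (1 : ℝ) else 0)) hij,
    ← mul_assoc, inv_mul_cancel₀ hcard.ne', one_mul]

end UniformPermutations

section Tail

open Real

variable {ι : Type*} [Fintype ι] {ρ : ι → ℝ}

theorem sum_filter_lt_le_exp_sub (hρ : ∀ i, 0 ≤ ρ i) (f : ι → ℝ) {t s M : ℝ} (ht : 0 ≤ t)
    (hmgf : ∑ i, ρ i * exp (t * f i) ≤ exp M) :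
    ∑ i ∈ univ.filter (fun i => s < f i), ρ i ≤ exp (M - t * s) := by
  rw [exp_sub, le_div_iff₀ (exp_pos _), sum_mul]
  calc ∑ i ∈ univ.filter (fun i => s < f i), ρ i * exp (t * s)
      ≤ ∑ i ∈ univ.filter (fun i => s < f i), ρ i * exp (t * f i) :=
        sum_le_sum fun i hi => mul_le_mul_of_nonneg_left
          (exp_le_exp.2 (mul_le_mul_of_nonneg_left (mem_filter.1 hi).2.le ht)) (hρ i)
    _ ≤ ∑ i, ρ i * exp (t * f i) :=
        sum_le_sum_of_subset_of_nonneg (subset_univ _) fun i _ _ =>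
          mul_nonneg (hρ i) (exp_nonneg _)
    _ ≤ exp M := hmgf

/-- Chernoff's bound at `t = s / (2 * A)`. -/
theorem sum_filter_lt_abs_sub_le (hρ : ∀ i, 0 ≤ ρ i) (f : ι → ℝ) {A : ℝ} (hA : 0 < A)
    (hmgf : ∀ t, ∑ i, ρ i * exp (t * f i) ≤ exp (t * ∑ i, ρ i * f i + t ^ 2 * A))
    {s : ℝ} (hs : 0 ≤ s) :
    ∑ i ∈ univ.filter (fun i => s < |f i - ∑ j, ρ j * f j|), ρ i ≤
      2 * exp (-(s ^ 2 / (4 * A))) := by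
  set fbar := ∑ j, ρ j * f j
  set t := s / (2 * A)
  have hup := sum_filter_lt_le_exp_sub hρ f (s := fbar + s) (by positivity) (hmgf t)
  have hdown := sum_filter_lt_le_exp_sub hρ (fun i => -f i) (t := t) (s := s - fbar)
    (M := -t * fbar + t ^ 2 * A) (by positivity)
    (by simpa only [mul_neg, neg_mul, neg_sq] using hmgf (-t))
  rw [show t * fbar + t ^ 2 * A - t * (fbar + s) = -(s ^ 2 / (4 * A)) by
    simp only [t]; field_simp; ring] at hup
  rw [show -t * fbar + t ^ 2 * A - t * (s - fbar) = -(s ^ 2 / (4 * A)) by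
    simp only [t]; field_simp; ring] at hdown
  refine le_trans ?_ (two_mul (exp _) ▸ add_le_add hup hdown)
  rw [sum_filter, sum_filter, sum_filter, ← sum_add_distrib]
  refine sum_le_sum fun i _ => ?_
  split_ifs with h h₁ h₂ h₂ <;> try linarith [hρ i]
  rcases lt_abs.1 h with h' | h' <;> linarith

end Tail

section Measure

variable {Ω X : Type*} [MeasurableSpace Ω] {μ : Measure Ω} [Fintype X]

theorem measure_setOf_eq_ofReal_sum {F : Ω → X} (hF : ∀ x, MeasurableSet {ω | F ω = x})
    {ρ : X → ℝ} (hρ : ∀ x, 0 ≤ ρ x) (hlaw : ∀ x, μ {ω | F ω = x} = ENNReal.ofReal (ρ x))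
    (P : X → Prop) [DecidablePred P] :
    μ {ω | P (F ω)} = ENNReal.ofReal (∑ x ∈ univ.filter P, ρ x) := by
  rw [ENNReal.ofReal_sum_of_nonneg fun x _ => hρ x, ← sum_congr rfl fun x _ => hlaw x]
  calc μ {ω | P (F ω)} = μ (F ⁻¹' ↑(univ.filter P)) := by congr 1; ext; simp
    _ = _ := (sum_measure_preimage_singleton _ fun x _ => hF x).symm

theorem measure_lt_abs_sub_le_of_mgf {F : Ω → X} (hF : ∀ x, MeasurableSet {ω | F ω = x})
    {ρ : X → ℝ} (hρ : ∀ x, 0 ≤ ρ x) (hlaw : ∀ x, μ {ω | F ω = x} = ENNReal.ofReal (ρ x))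
    (G : X → ℝ) {A : ℝ} (hA : 0 < A)
    (hmgf : ∀ t, ∑ x, ρ x * exp (t * G x) ≤ exp (t * ∑ x, ρ x * G x + t ^ 2 * A))
    {s : ℝ} (hs : 0 ≤ s) :
    μ {ω | s < |G (F ω) - ∑ x, ρ x * G x|} ≤ ENNReal.ofReal (2 * exp (-(s ^ 2 / (4 * A)))) := by
  rw [measure_setOf_eq_ofReal_sum hF hρ hlaw fun x => s < |G x - ∑ x, ρ x * G x|]
  exact ENNReal.ofReal_le_ofReal (sum_filter_lt_abs_sub_le hρ G hA hmgf hs)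

theorem ProbabilityTheory.iIndepFun.measure_setOf_eq_ofReal_prod {ι α : Type*} [Fintype ι]
    [MeasurableSpace α] [MeasurableSingletonClass α] {W : ι → Ω → α} (hW : iIndepFun W μ)
    {p : α → ℝ} (hp : ∀ k, 0 ≤ p k) (hlaw : ∀ i k, μ {ω | W i ω = k} = ENNReal.ofReal (p k))
    (u : ι → α) :
    μ {ω | (fun i => W i ω) = u} = ENNReal.ofReal (∏ i, p (u i)) := by
  have hcell : {ω | (fun i => W i ω) = u} = ⋂ i ∈ univ, W i ⁻¹' {u i} := by
    ext
    simp [funext_iff]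
  rw [hcell, hW.measure_inter_preimage_eq_mul _ fun i _ => measurableSet_singleton _,
    ENNReal.ofReal_prod_of_nonneg fun i _ => hp _]
  exact prod_congr rfl fun i _ => hlaw i (u i)

theorem measure_lt_abs_sub_le_add {Y Z : Ω → ℝ} {a b ε : ℝ} (hab : |a - b| ≤ ε / 2) :
    μ {ω | ε < |Y ω - Z ω|} ≤ μ {ω | ε / 4 < |Y ω - a|} + μ {ω | ε / 4 < |Z ω - b|} := by
  refine (measure_mono fun ω hω => ?_).trans (measure_union_le _ _)
  by_contra hnot
  simp only [Set.mem_union, Set.mem_ofPred_eq, not_or, not_lt] at hω hnot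
  have := abs_sub_le (Y ω) a (Z ω)
  have := abs_sub_le a b (Z ω)
  linarith [hnot.1, hnot.2, abs_sub_comm (Z ω) b]

end Measure

section QuadraticCount

variable {N d : ℕ} {α : Type*} [DecidableEq α]

noncomputable def quadraticCount (σ : Fin d → Fin N → Fin N) (m ℓ : α) (u : Fin N → α) : ℝ :=
  (1 / (N : ℝ)) * ∑ t, ∑ i,
    (if u i = m then (1 : ℝ) else 0) * (if u (σ t i) = ℓ then (1 : ℝ) else 0)

theorem abs_ite_mul_ite_sub_ite_mul_ite_le {a a' b b' : α} (m ℓ : α) :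
    |(if a = m then (1 : ℝ) else 0) * (if b = ℓ then (1 : ℝ) else 0) -
        (if a' = m then (1 : ℝ) else 0) * (if b' = ℓ then (1 : ℝ) else 0)| ≤
      (if a ≠ a' then (1 : ℝ) else 0) + (if b ≠ b' then (1 : ℝ) else 0) := by
  split_ifs <;> simp_all

theorem sum_ite_ne_eq_hammingDist (u v : Fin N → α) :
    ∑ i, (if u i ≠ v i then (1 : ℝ) else 0) = hammingDist u v := by
  rw [sum_boole, hammingDist]

theorem hammingDist_update_le_one (u : Fin N → α) (j : Fin N) (x : α) :
    hammingDist (Function.update u j x) u ≤ 1 := by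
  refine (card_le_card fun i hi => ?_).trans (card_singleton j).le
  by_contra hij
  simp_all [Function.update_of_ne]

theorem hammingDist_comp_swap_mul_le_two (w : Fin N → α) (e : Perm (Fin N)) (a b : Fin N) :
    hammingDist (w ∘ ⇑(swap a b * e)) (w ∘ e) ≤ 2 := by
  refine (card_le_card fun i hi => ?_).trans (card_le_two (a := e.symm a) (b := e.symm b))
  have hne : swap a b (e i) ≠ e i := fun h => (mem_filter.1 hi).2 (by simp [h])
  rcases swap_apply_ne_self_iff.1 hne with ⟨-, h | h⟩ <;> simp [← h]

theorem abs_quadraticCount_sub_le (σ : Fin d → Fin N → Fin N)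
    (hσ : ∀ t, Function.Bijective (σ t)) (m ℓ : α) (u v : Fin N → α) :
    |quadraticCount σ m ℓ u - quadraticCount σ m ℓ v| ≤ 2 * d / N * hammingDist u v := by
  have hcomp : ∀ t, ∑ i, (if u (σ t i) ≠ v (σ t i) then (1 : ℝ) else 0) = hammingDist u v :=
    fun t => by
      rw [← sum_ite_ne_eq_hammingDist]
      exact (Equiv.ofBijective _ (hσ t)).sum_comp fun i => if u i ≠ v i then (1 : ℝ) else 0
  rw [quadraticCount, quadraticCount, ← mul_sub, abs_mul, abs_of_nonneg (by positivity)]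
  calc 1 / (N : ℝ) * |∑ t, ∑ i, (if u i = m then (1 : ℝ) else 0) *
          (if u (σ t i) = ℓ then (1 : ℝ) else 0) - ∑ t, ∑ i, (if v i = m then (1 : ℝ) else 0) *
          (if v (σ t i) = ℓ then (1 : ℝ) else 0)|
      ≤ 1 / N * ∑ t : Fin d, ∑ i, ((if u i ≠ v i then (1 : ℝ) else 0) +
          (if u (σ t i) ≠ v (σ t i) then (1 : ℝ) else 0)) := by
        gcongr
        simp only [← sum_sub_distrib]
        exact (abs_sum_le_sum_abs _ _).trans (sum_le_sum fun t _ => (abs_sum_le_sum_abs _ _).trans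
          (sum_le_sum fun i _ => abs_ite_mul_ite_sub_ite_mul_ite_le m ℓ))
    _ = 2 * d / N * hammingDist u v := by
        simp only [sum_add_distrib, sum_ite_ne_eq_hammingDist, hcomp, sum_const, card_univ,
          Fintype.card_fin, nsmul_eq_mul]
        ring

theorem sum_mul_quadraticCount {X : Type*} [Fintype X] (σ : Fin d → Fin N → Fin N) (m ℓ : α)
    (ρ : X → ℝ) (u : X → Fin N → α) :
    ∑ x, ρ x * quadraticCount σ m ℓ (u x) = 1 / (N : ℝ) * ∑ t, ∑ i, ∑ x,
      ρ x * ((if u x i = m then (1 : ℝ) else 0) * (if u x (σ t i) = ℓ then (1 : ℝ) else 0)) := by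
  simp only [quadraticCount, mul_sum]
  rw [sum_comm]
  refine sum_congr rfl fun t _ => ?_
  rw [sum_comm]
  exact sum_congr rfl fun i _ => sum_congr rfl fun x _ => by ring

theorem abs_sub_div_sub_div_sq_le {P D x : ℝ} (hx : 1 < x) (hP : 0 ≤ P) (hPx : P ≤ x ^ 2)
    (hD : 0 ≤ D) (hDx : D ≤ x) : |(P - D) / (x * (x - 1)) - P / x ^ 2| ≤ 1 / (x - 1) := by
  have hx1 : 0 < x - 1 := sub_pos.2 hx
  have hx0 : 0 < x := by linarith
  rw [show (P - D) / (x * (x - 1)) - P / x ^ 2 = (P - x * D) / x ^ 2 * (1 / (x - 1)) by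
    field_simp; ring, abs_mul, abs_of_pos (one_div_pos.2 hx1)]
  refine mul_le_of_le_one_left (one_div_pos.2 hx1).le ?_
  rw [abs_div, abs_of_pos (pow_pos hx0 2), div_le_one (pow_pos hx0 2), abs_le]
  constructor <;> nlinarith

theorem abs_sum_perm_sub_sum_prod_quadraticCount_le [Fintype α] (σ : Fin d → Fin N → Fin N)
    (hσ : ∀ t i, σ t i ≠ i) (m ℓ : α) {n : α → ℕ} (hn : ∑ k, n k = N) (w : Fin N → α)
    (hw : ∀ k, #{i | w i = k} = n k) (hN : 1 < N) :
    |∑ e : Perm (Fin N), (Fintype.card (Perm (Fin N)) : ℝ)⁻¹ * quadraticCount σ m ℓ (w ∘ e) -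
        ∑ u, (∏ i, (n (u i) : ℝ) / N) * quadraticCount σ m ℓ u| ≤ d / (N - 1) := by
  have hN1 : (1 : ℝ) < N := by exact_mod_cast hN
  have hcount : ∀ k, (∑ a, if w a = k then (1 : ℝ) else 0) = n k := fun k => by
    rw [sum_boole, hw]
  have hnN : ∀ k, (n k : ℝ) ≤ N := fun k => by
    rw [← hw k]
    exact_mod_cast (card_filter_le _ _).trans (card_univ.trans (Fintype.card_fin N)).le
  have hdiag : ∑ a, (if w a = m then (1 : ℝ) else 0) * (if w a = ℓ then (1 : ℝ) else 0) ≤ N := by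
    calc _ ≤ ∑ _a : Fin N, (1 : ℝ) := sum_le_sum fun a _ => by split_ifs <;> norm_num
      _ = N := by simp
  have hpair : ∀ t i, |∑ e : Perm (Fin N), (Fintype.card (Perm (Fin N)) : ℝ)⁻¹ *
        ((if w (e i) = m then (1 : ℝ) else 0) * (if w (e (σ t i)) = ℓ then (1 : ℝ) else 0)) -
      ∑ u : Fin N → α, (∏ k, (n (u k) : ℝ) / N) *
        ((if u i = m then (1 : ℝ) else 0) * (if u (σ t i) = ℓ then (1 : ℝ) else 0))| ≤
      1 / (N - 1) := fun t i => by
    rw [sum_inv_card_perm_mul_ite_mul_ite w (hσ t i).symm,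
      sum_prod_mul_ite_mul_ite (natCast_div_mem_stdSimplex (by omega) hn) (hσ t i).symm,
      hcount, hcount, div_mul_div_comm, ← sq]
    exact abs_sub_div_sub_div_sq_le hN1 (by positivity)
      (by rw [sq]; exact mul_le_mul (hnN m) (hnN ℓ) (by positivity) (by positivity))
      (sum_nonneg fun a _ => by split_ifs <;> norm_num) hdiag
  rw [sum_mul_quadraticCount, sum_mul_quadraticCount σ m ℓ _ fun u => u, ← mul_sub,
    ← sum_sub_distrib, abs_mul, abs_of_pos (by positivity)]
  simp only [Function.comp_apply, ← sum_sub_distrib]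
  calc 1 / (N : ℝ) * |∑ t : Fin d, ∑ i : Fin N, _|
      ≤ 1 / (N : ℝ) * ∑ _t : Fin d, ∑ _i : Fin N, 1 / ((N : ℝ) - 1) := by
        gcongr
        exact (abs_sum_le_sum_abs _ _).trans (sum_le_sum fun t _ =>
          (abs_sum_le_sum_abs _ _).trans (sum_le_sum fun i _ => hpair t i))
    _ = d / (N - 1) := by
        simp only [sum_const, card_univ, Fintype.card_fin, nsmul_eq_mul]
        field_simp

variable {Ω : Type*} [MeasurableSpace Ω] {μ : Measure Ω}

theorem measure_lt_abs_quadraticCount_perm_sub_le (σ : Fin d → Fin N → Fin N)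
    (hσ : ∀ t, Function.Bijective (σ t)) (hd : 0 < d) (hN : 0 < N) (m ℓ : α)
    {π : Ω → Perm (Fin N)} (hπ : ∀ e, MeasurableSet {ω | π ω = e})
    (hunif : ∀ e, μ {ω | π ω = e} = (Fintype.card (Perm (Fin N)) : ℝ≥0∞)⁻¹) (w : Fin N → α)
    {s : ℝ} (hs : 0 ≤ s) :
    μ {ω | s < |quadraticCount σ m ℓ (w ∘ π ω) - ∑ e : Perm (Fin N),
        (Fintype.card (Perm (Fin N)) : ℝ)⁻¹ * quadraticCount σ m ℓ (w ∘ e)|} ≤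
      ENNReal.ofReal (2 * exp (-(s ^ 2 * N / (128 * d ^ 2)))) := by
  have hlaw : ∀ e, μ {ω | π ω = e} = ENNReal.ofReal (Fintype.card (Perm (Fin N)) : ℝ)⁻¹ :=
    fun e => by rw [hunif, ENNReal.ofReal_inv_of_pos (by exact_mod_cast Fintype.card_pos),
      ENNReal.ofReal_natCast]
  have hswap : ∀ (e : Perm (Fin N)) (a b : Fin N), |quadraticCount σ m ℓ (w ∘ ⇑(swap a b * e)) -
      quadraticCount σ m ℓ (w ∘ e)| ≤ 2 * d / N * 2 := fun e a b =>
    (abs_quadraticCount_sub_le σ hσ m ℓ _ _).trans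
      (by gcongr; exact_mod_cast hammingDist_comp_swap_mul_le_two w e a b)
  have hmgf := fun t => (sum_inv_card_perm_mul_exp_le
    (fun e => quadraticCount σ m ℓ (w ∘ ⇑e)) hswap t).trans_eq
    (congrArg (fun M => exp (_ + M)) (show (N : ℝ) * (t ^ 2 * (2 * (2 * d / N * 2)) ^ 2 / 2) =
      t ^ 2 * (32 * d ^ 2 / N) by field_simp; ring))
  rw [show s ^ 2 * N / (128 * d ^ 2) = s ^ 2 / (4 * (32 * d ^ 2 / N)) by field_simp; ring]
  exact measure_lt_abs_sub_le_of_mgf hπ (fun _ => by positivity) hlaw _ (by positivity) hmgf hs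

theorem measure_lt_abs_quadraticCount_iid_sub_le [Fintype α] [MeasurableSpace α]
    [MeasurableSingletonClass α] (σ : Fin d → Fin N → Fin N)
    (hσ : ∀ t, Function.Bijective (σ t)) (hd : 0 < d) (hN : 0 < N) (m ℓ : α)
    {W : Fin N → Ω → α} (hW : ∀ i, Measurable (W i)) (hindep : iIndepFun W μ) {p : α → ℝ}
    (hp : p ∈ stdSimplex ℝ α) (hlaw : ∀ i k, μ {ω | W i ω = k} = ENNReal.ofReal (p k))
    {s : ℝ} (hs : 0 ≤ s) :
    μ {ω | s < |quadraticCount σ m ℓ (fun i => W i ω) -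
        ∑ u, (∏ i, p (u i)) * quadraticCount σ m ℓ u|} ≤
      ENNReal.ofReal (2 * exp (-(s ^ 2 * N / (8 * d ^ 2)))) := by
  have hupdate : ∀ u i x, |quadraticCount σ m ℓ (Function.update u i x) -
      quadraticCount σ m ℓ u| ≤ 2 * d / N := fun u i x =>
    (abs_quadraticCount_sub_le σ hσ m ℓ _ _).trans (mul_le_of_le_one_right (by positivity)
      (by exact_mod_cast hammingDist_update_le_one u i x))
  have hmgf := fun t => (sum_prod_mul_exp_le hp _ hupdate t).trans_eq
    (congrArg (fun M => exp (_ + M)) (show (N : ℝ) * (t ^ 2 * (2 * d / N) ^ 2 / 2) =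
      t ^ 2 * (2 * d ^ 2 / N) by field_simp))
  rw [show s ^ 2 * N / (8 * d ^ 2) = s ^ 2 / (4 * (2 * d ^ 2 / N)) by field_simp; ring]
  exact measure_lt_abs_sub_le_of_mgf (F := fun ω i => W i ω)
    (fun u => measurable_pi_lambda _ hW (measurableSet_singleton u)) (prod_mem_stdSimplex hp).1
    (hindep.measure_setOf_eq_ofReal_prod hp.1 hlaw) _ (by positivity) hmgf hs

theorem measure_lt_abs_quadraticCount_sub_le [Fintype α] [MeasurableSpace α]
    [MeasurableSingletonClass α] (σ : Fin d → Fin N → Fin N) (hσ2 : ∀ t i, σ t (σ t i) = i)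
    (hσ1 : ∀ t i, σ t i ≠ i) (hd : 0 < d) (m ℓ : α) {n : α → ℕ} (hn : ∑ k, n k = N)
    (w : Fin N → α) (hw : ∀ k, #{i | w i = k} = n k) {π : Ω → Perm (Fin N)}
    (hπ : ∀ e, MeasurableSet {ω | π ω = e})
    (hunif : ∀ e, μ {ω | π ω = e} = (Fintype.card (Perm (Fin N)) : ℝ≥0∞)⁻¹)
    {W : Fin N → Ω → α} (hW : ∀ i, Measurable (W i)) (hindep : iIndepFun W μ)
    (hlaw : ∀ i k, μ {ω | W i ω = k} = (n k : ℝ≥0∞) / (N : ℝ≥0∞))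
    {ε : ℝ} (hε : 0 < ε) (hNε : 2 * d / ε + 2 ≤ N) :
    μ {ω | ε < |quadraticCount σ m ℓ (w ∘ π ω) - quadraticCount σ m ℓ (fun i => W i ω)|} ≤
      ENNReal.ofReal (4 * exp (-(ε ^ 2 / (2048 * d ^ 2) * N))) := by
  have hσ : ∀ t, Function.Bijective (σ t) := fun t => Function.Involutive.bijective (hσ2 t)
  have hN : (1 : ℝ) < N := by linarith [show (0 : ℝ) ≤ 2 * d / ε by positivity]
  have hN0 : 0 < N := by exact_mod_cast hN.trans' one_pos
  have hlaw' : ∀ i k, μ {ω | W i ω = k} = ENNReal.ofReal (n k / N) := fun i k => by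
    rw [hlaw, ENNReal.ofReal_div_of_pos (by positivity), ENNReal.ofReal_natCast,
      ENNReal.ofReal_natCast]
  have hmean := (abs_sum_perm_sub_sum_prod_quadraticCount_le σ hσ1 m ℓ hn w hw
    (by exact_mod_cast hN)).trans (show (d : ℝ) / (N - 1) ≤ ε / 2 by
      rw [div_le_iff₀ (by linarith)]
      linarith [(div_le_iff₀ hε).1 (show 2 * d / ε ≤ (N : ℝ) - 2 by linarith)])
  refine (measure_lt_abs_sub_le_add hmean).trans ((add_le_add
    (measure_lt_abs_quadraticCount_perm_sub_le σ hσ hd hN0 m ℓ hπ hunif w (by positivity))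
    (measure_lt_abs_quadraticCount_iid_sub_le σ hσ hd hN0 m ℓ hW hindep
      (natCast_div_mem_stdSimplex hN0 hn) hlaw' (by positivity))).trans ?_)
  rw [← ENNReal.ofReal_add (by positivity) (by positivity)]
  refine ENNReal.ofReal_le_ofReal ?_
  have hiid : -((ε / 4) ^ 2 * N / (8 * d ^ 2)) ≤ -((ε / 4) ^ 2 * N / (128 * d ^ 2)) := by
    gcongr
    norm_num
  rw [show (ε / 4) ^ 2 * N / (128 * d ^ 2) = ε ^ 2 / (2048 * d ^ 2) * N by ring] at hiid ⊢
  linarith [Real.exp_le_exp.2 hiid]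

end QuadraticCount

/-- Theorem 4.2 of the paper: for every `ε > 0` there are constants
`C, c > 0`, depending only on `ε` and the degree `d`, such that for any `N`,
`K`, count vector `n` summing to `N`, arrangement `w` with fibers of sizes `n`,
fixed-point-free involutions `σ 1, …, σ d` of `Fin N` (perfect matchings), and
any coupling on a common probability space of `V = w ∘ π` (with `π` a uniform
random permutation of `Fin N`) and `W` with i.i.d. coordinates of law `n/N`,
the quadratic interaction counts
`Q_{m,ℓ}(u) = (1/N) ∑ t, ∑ i, 1{u i = m} 1{u (σ t i) = ℓ}` satisfy
`P(|Q_{m,ℓ}(V) − Q_{m,ℓ}(W)| > ε) ≤ C exp (−c N)` for all `m, ℓ`. -/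
theorem coupled_quadratic_counts_close
    (d : ℕ) (hd : 0 < d) (ε : ℝ) (hε : 0 < ε) :
    ∃ C > (0 : ℝ), ∃ c > (0 : ℝ),
      ∀ (N K : ℕ), 0 < N → 0 < K →
      ∀ (σ : Fin d → Fin N → Fin N),
        (∀ t i, σ t (σ t i) = i) → (∀ t i, σ t i ≠ i) →
      ∀ (n : Fin K → ℕ), (∑ k, n k) = N →
      ∀ (w : Fin N → Fin K),
        (∀ k, (Finset.univ.filter fun i => w i = k).card = n k) →
      ∀ (Ω : Type) (_ : MeasurableSpace Ω) (μ : Measure Ω),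
        IsProbabilityMeasure μ →
      ∀ (π : Ω → Equiv.Perm (Fin N)) (V : Ω → Fin N → Fin K)
        (W : Fin N → Ω → Fin K),
        (∀ e : Equiv.Perm (Fin N), MeasurableSet {ω | π ω = e}) →
        (∀ i, Measurable (W i)) →
        -- `π` is a uniformly distributed random permutation:
        (∀ e : Equiv.Perm (Fin N),
          μ {ω | π ω = e} = ((Fintype.card (Equiv.Perm (Fin N)) : ℝ≥0∞))⁻¹) →
        -- `V` is distributed as `w ∘ π`:
        (∀ ω i, V ω i = w (π ω i)) →
        -- the coordinates of `W` are i.i.d. with law `n/N`: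
        iIndepFun W μ →
        (∀ i k, μ {ω | W i ω = k} = (n k : ℝ≥0∞) / (N : ℝ≥0∞)) →
      ∀ m ℓ : Fin K,
        μ {ω | ε <
            |((1 / (N : ℝ)) * ∑ t : Fin d, ∑ i : Fin N,
                (if V ω i = m then (1 : ℝ) else 0) *
                  (if V ω (σ t i) = ℓ then (1 : ℝ) else 0)) -
              (1 / (N : ℝ)) * ∑ t : Fin d, ∑ i : Fin N,
                (if W i ω = m then (1 : ℝ) else 0) *
                  (if W (σ t i) ω = ℓ then (1 : ℝ) else 0)|} ≤
          ENNReal.ofReal (C * Real.exp (-c * N)) := by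
  set N₀ : ℕ := ⌈2 * d / ε⌉₊ + 2
  set c : ℝ := ε ^ 2 / (2048 * d ^ 2)
  refine ⟨4 * exp (c * N₀), by positivity, c, by positivity, ?_⟩
  intro N K _ _ σ hσ2 hσ1 n hn w hw Ω _ μ _ π V W hπ hW hunif hV hindep hlaw m ℓ
  obtain rfl : V = fun ω => w ∘ π ω := funext fun ω => funext (hV ω)
  have hC : exp (-c * N) ≤ exp (c * N₀) * exp (-c * N) :=
    le_mul_of_one_le_left (Real.exp_pos _).le (Real.one_le_exp (by positivity))
  rcases lt_or_ge N N₀ with hsmall | hlarge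
  · refine prob_le_one.trans (ENNReal.one_le_ofReal.2 ?_)
    have hcN : c * N ≤ c * N₀ := by gcongr
    rw [mul_assoc, ← Real.exp_add]
    nlinarith [Real.one_le_exp (show 0 ≤ c * N₀ + -c * N by linarith)]
  · refine (measure_lt_abs_quadraticCount_sub_le σ hσ2 hσ1 hd m ℓ hn w hw hπ hunif hW hindep
      hlaw hε ?_).trans (ENNReal.ofReal_le_ofReal ?_)
    · calc (2 * d / ε : ℝ) + 2 ≤ N₀ := by push_cast [N₀]; gcongr; exact Nat.le_ceil _
        _ ≤ N := by exact_mod_cast hlarge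
    · rw [mul_assoc, ← neg_mul]
      linarith
end
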